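/- arXiv:2508.12836 — 3 statements merged into one kernel-verified Lean document; each statement's English description precedes it below -/
import Mathlib

section
/- Let R be a ring, e ∈ R an idempotent, and M a right module over R/(e) (viewed as an R-module annihilated by e). Then Ext^i_R(Re ⊗_{eRe} eR, M) = 0 for i = 0 and i = 1. -/
/-!
STATEMENT 0: Let R be a ring, e ∈ R an idempotent, and M a right R-module annihilated
by the two-sided ideal (e) = ReR. Then Ext^i_R(Re ⊗_{eRe} eR, M) = 0 for i = 0, 1.

Right R-modules are formalized as modules over Rᵐᵒᵖ. The right R-module
Re ⊗_{eRe} eR is characterized by its universal property: it receives a map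
β : R × R → N, (x, y) ↦ xe ⊗ ey which is bi-additive, eRe-balanced and right
R-linear in the second variable, and which is universal among such maps.
-/

open CategoryTheory

universe u

variable {R : Type u} [Ring R]

/-- `N` together with `β` is (a model of) the right `R`-module `Re ⊗_{eRe} eR`,
where `β x y` corresponds to the elementary tensor `(x * e) ⊗ (e * y)`. -/
structure IsCornerTensor (e : R) (N : Type u) [AddCommGroup N] [Module Rᵐᵒᵖ N] where
  β : R → R → N
  add_left : ∀ x x' y, β (x + x') y = β x y + β x' y
  add_right : ∀ x y y', β x (y + y') = β x y + β x y'
  factors : ∀ x y, β x y = β (x * e) (e * y)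
  balanced : ∀ x s y, β (x * (e * s * e)) y = β x ((e * s * e) * y)
  right_linear : ∀ x y r, β x (y * r) = MulOpposite.op r • β x y
  univ : ∀ (P : Type u) [AddCommGroup P] [Module Rᵐᵒᵖ P] (γ : R → R → P),
    (∀ x x' y, γ (x + x') y = γ x y + γ x' y) →
    (∀ x y y', γ x (y + y') = γ x y + γ x y') →
    (∀ x y, γ x y = γ (x * e) (e * y)) →
    (∀ x s y, γ (x * (e * s * e)) y = γ x ((e * s * e) * y)) →
    (∀ x y r, γ x (y * r) = MulOpposite.op r • γ x y) →
    ∃! f : N →ₗ[Rᵐᵒᵖ] P, ∀ x y, f (β x y) = γ x y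

/-
Write `β x y` for `xe ⊗ ey`. Since `β x y = β x e • y` and `β x e = β x e • e`, the module
`N = Re ⊗_{eRe} eR` is generated by elements fixed by `e`, so every map from `N` to a module
killed by `e` vanishes: this is `Ext⁰`. For `Ext¹`, let `π : E → N` be an extension by a module
killed by `e`. Two lifts fixed by `e` of the same element differ by an element of the kernel
that is both fixed and killed by `e`, so they coincide. Hence `β x e` has a unique lift
`t x ∈ Ee`, and `β x y ↦ t x • y` is well defined by the universal property and is a section
of `π`. A cocycle `P₁ → M` on a projective resolution extends along `P₁ → P₀` by splitting its
pushout extension.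
-/

open MulOpposite

def ExtensionsSplit (S : Type*) [Ring S] (M N : Type u) [AddCommGroup M] [Module S M]
    [AddCommGroup N] [Module S N] : Prop :=
  ∀ (E : Type u) [AddCommGroup E] [Module S E] (ι : M →ₗ[S] E) (π : E →ₗ[S] N),
    Function.Injective ι → Function.Exact ι π → Function.Surjective π →
      ∃ ρ : E →ₗ[S] M, ρ ∘ₗ ι = LinearMap.id

-- `g` is read off a retraction of the pushout of `d` along `f`, an extension of `N` by `M`.
open LinearMap in
theorem ExtensionsSplit.exists_comp_eq {S : Type*} [Ring S] {M N P₀ P₁ : Type u}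
    [AddCommGroup M] [Module S M] [AddCommGroup N] [Module S N]
    [AddCommGroup P₀] [Module S P₀] [AddCommGroup P₁] [Module S P₁]
    (hsplit : ExtensionsSplit S M N) {d : P₁ →ₗ[S] P₀} {p : P₀ →ₗ[S] N}
    (hdp : Function.Exact d p) (hp : Function.Surjective p) {f : P₁ →ₗ[S] M}
    (hf : ker d ≤ ker f) : ∃ g : P₀ →ₗ[S] M, g ∘ₗ d = f := by
  let W := range (f.prod (-d))
  let ι := W.mkQ ∘ₗ inl S M P₀
  let j := W.mkQ ∘ₗ inr S M P₀
  have hpW : W ≤ ker (p ∘ₗ snd S M P₀) := by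
    rintro _ ⟨u, rfl⟩
    simp [hdp.apply_apply_eq_zero]
  let π := W.liftQ (p ∘ₗ snd S M P₀) hpW
  have hjd : ∀ x, j (d x) = ι (f x) := fun x =>
    (Submodule.Quotient.eq W).mpr ⟨-x, by simp⟩
  have hι : Function.Injective ι := by
    refine (injective_iff_map_eq_zero ι).mpr fun m hm => ?_
    obtain ⟨u, hu⟩ := (Submodule.Quotient.mk_eq_zero W).mp hm
    obtain ⟨rfl, hdu⟩ : f u = m ∧ d u = 0 := by simpa [Prod.ext_iff] using hu
    exact hf hdu
  have hιπ : Function.Exact ι π := by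
    intro z
    induction z using Submodule.Quotient.induction_on with
    | H z =>
      obtain ⟨m, q⟩ := z
      refine ⟨fun hq => ?_, ?_⟩
      · obtain ⟨u, rfl⟩ := (hdp q).mp hq
        exact ⟨m + f u, (Submodule.Quotient.eq W).mpr ⟨u, by simp⟩⟩
      · rintro ⟨m', hm'⟩
        rw [← hm']
        simp [π, ι]
  have hπ : Function.Surjective π := fun n =>
    let ⟨q, hq⟩ := hp n
    ⟨W.mkQ (0, q), hq⟩
  obtain ⟨ρ, hρ⟩ := hsplit _ ι π hι hιπ hπ
  refine ⟨ρ ∘ₗ j, LinearMap.ext fun x => ?_⟩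
  simpa [hjd] using LinearMap.congr_fun hρ (f x)

section Ext

variable {K : Type*} [Ring K]

lemma isZero_Ext_zero_of_forall_eq_zero {C : Type*} [Category* C] [Abelian C] [Linear K C]
    [EnoughProjectives C] {X Y : C} (h : ∀ f : X ⟶ Y, f = 0) :
    Limits.IsZero (((Ext K C 0).obj (Opposite.op X)).obj Y) := by
  let P := ProjectiveResolution.of X
  refine Limits.IsZero.of_iso ?_ (P.isoExt 0 Y)
  rw [← HomologicalComplex.exactAt_iff_isZero_homology,
    HomologicalComplex.exactAt_iff' _ 0 0 1 (by simp) (by simp),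
    ShortComplex.moduleCat_exact_iff]
  intro (f : P.complex.X 0 ⟶ Y) hf
  obtain ⟨g, rfl⟩ : ∃ g : X ⟶ Y, P.π.f 0 ≫ g = f := P.exact₀.desc' f hf
  exact ⟨0, by rw [map_zero, h g]; exact Limits.comp_zero.symm⟩

open LinearMap in
lemma ModuleCat.isZero_Ext_one_of_extensionsSplit {S : Type u} [Ring S]
    [Linear K (ModuleCat.{u} S)] {X Y : ModuleCat.{u} S} (h : ExtensionsSplit S Y X) :
    Limits.IsZero (((Ext K (ModuleCat.{u} S) 1).obj (Opposite.op X)).obj Y) := by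
  let P := ProjectiveResolution.of X
  refine Limits.IsZero.of_iso ?_ (P.isoExt 1 Y)
  rw [← HomologicalComplex.exactAt_iff_isZero_homology,
    HomologicalComplex.exactAt_iff' _ 0 1 2 (by simp) (by simp),
    ShortComplex.moduleCat_exact_iff]
  intro (f : P.complex.X 1 ⟶ Y) hf
  replace hf : P.complex.d 2 1 ≫ f = 0 := hf
  have hexact : Function.Exact (P.complex.d 1 0).hom (P.π.f 0).hom :=
    (ShortComplex.ShortExact.moduleCat_exact_iff_function_exact _).mp P.exact₀
  have hker : ker (P.complex.d 1 0).hom ≤ ker f.hom := by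
    intro x hx
    obtain ⟨y, rfl⟩ := (ShortComplex.moduleCat_exact_iff _).mp (P.exact_succ 0) x hx
    exact congr(($hf).hom y)
  obtain ⟨g, hg⟩ := h.exists_comp_eq hexact
    ((ModuleCat.epi_iff_surjective _).mp inferInstance) hker
  exact ⟨ModuleCat.ofHom g, ModuleCat.hom_ext hg⟩

end Ext

lemma eq_of_map_eq_of_smul_eq {S : Type*} [Ring S] {E N : Type*} [AddCommGroup E] [Module S E]
    [AddCommGroup N] [Module S N] {π : E →ₗ[S] N} {s : S} (hker : ∀ a, π a = 0 → s • a = 0)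
    {a b : E} (hab : π a = π b) (ha : s • a = a) (hb : s • b = b) : a = b := by
  rw [← ha, ← hb, ← sub_eq_zero, ← smul_sub]
  exact hker _ (by rw [map_sub, hab, sub_self])

namespace IsCornerTensor

variable {e : R} {N : Type u} [AddCommGroup N] [Module Rᵐᵒᵖ N] (hN : IsCornerTensor e N)
include hN

lemma hom_ext {P : Type u} [AddCommGroup P] [Module Rᵐᵒᵖ P] {f g : N →ₗ[Rᵐᵒᵖ] P}
    (h : ∀ x y, f (hN.β x y) = g (hN.β x y)) : f = g := by
  obtain ⟨k, -, hk⟩ := hN.univ P (fun x y => g (hN.β x y))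
    (by simp [hN.add_left]) (by simp [hN.add_right]) (fun x y => by rw [← hN.factors])
    (by simp [hN.balanced]) (by simp [hN.right_linear])
  exact (hk f h).trans (hk g fun _ _ => rfl).symm

variable (he : IsIdempotentElem e)
include he

lemma β_eq_smul (x y : R) : hN.β x y = op y • hN.β x e := by
  rw [← hN.right_linear, hN.factors, hN.factors x (e * y), ← mul_assoc e, he.eq]

lemma β_mul_idem (x y : R) : hN.β (x * e) y = hN.β x y := by
  rw [hN.factors x y, hN.factors (x * e), mul_assoc, he.eq]

lemma smul_β_idem (x : R) : op e • hN.β x e = hN.β x e := by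
  rw [← hN.β_eq_smul he]

lemma hom_eq_zero {M : Type u} [AddCommGroup M] [Module Rᵐᵒᵖ M] (hM : ∀ m : M, op e • m = 0)
    (f : N →ₗ[Rᵐᵒᵖ] M) : f = 0 :=
  hN.hom_ext fun x y => by
    rw [hN.β_eq_smul he, ← hN.smul_β_idem he, map_smul, map_smul, hM, smul_zero,
      LinearMap.zero_apply]

lemma exists_section {E : Type u} [AddCommGroup E] [Module Rᵐᵒᵖ E] {π : E →ₗ[Rᵐᵒᵖ] N}
    (hπ : Function.Surjective π) (hker : ∀ a, π a = 0 → op e • a = 0) :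
    ∃ σ : N →ₗ[Rᵐᵒᵖ] E, π ∘ₗ σ = LinearMap.id := by
  have he' : op e * op e = op e := by rw [← op_mul, he.eq]
  have hunique : ∀ {a b : E}, π a = π b → op e • a = a → op e • b = b → a = b :=
    eq_of_map_eq_of_smul_eq hker
  choose a ha using fun x => hπ (hN.β x e)
  set t : R → E := fun x => op e • a x
  have ht : ∀ x, π (t x) = hN.β x e := fun x => by rw [map_smul, ha, hN.smul_β_idem he]
  have ht_idem : ∀ x, op e • t x = t x := fun x => by rw [smul_smul, he']
  have ht_add : ∀ x x', t (x + x') = t x + t x' := fun x x' =>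
    hunique (by rw [map_add, ht, ht, ht, hN.add_left]) (ht_idem _)
      (by rw [smul_add, ht_idem, ht_idem])
  have ht_mul_e : ∀ x, t (x * e) = t x := fun x =>
    hunique (by rw [ht, ht, hN.β_mul_idem he]) (ht_idem _) (ht_idem _)
  have ht_corner : ∀ x s, t (x * (e * s * e)) = op (e * s * e) • t x := fun x s =>
    hunique (by rw [ht, map_smul, ht, hN.balanced, mul_assoc (e * s), he.eq, ← hN.β_eq_smul he])
      (ht_idem _) (by rw [smul_smul, ← op_mul, mul_assoc, mul_assoc, he.eq, ← mul_assoc])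
  obtain ⟨σ, hσ, -⟩ := hN.univ E (fun x y => op y • t x)
    (fun x x' y => by rw [ht_add, smul_add])
    (fun x y y' => by rw [MulOpposite.op_add, add_smul])
    (fun x y => by rw [ht_mul_e, op_mul, mul_smul, ht_idem])
    (fun x s y => by rw [ht_corner, smul_smul, ← op_mul])
    (fun x y r => by rw [op_mul, mul_smul])
  refine ⟨σ, hN.hom_ext fun x y => ?_⟩
  rw [LinearMap.comp_apply, hσ, map_smul, ht, LinearMap.id_apply, ← hN.β_eq_smul he]

lemma extensionsSplit {M : Type u} [AddCommGroup M] [Module Rᵐᵒᵖ M]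
    (hM : ∀ m : M, op e • m = 0) : ExtensionsSplit Rᵐᵒᵖ M N := by
  intro E _ _ ι π hι hιπ hπ
  refine ((hιπ.split_tfae hι hπ).out 0 1).mp (hN.exists_section he hπ fun a ha => ?_)
  obtain ⟨m, rfl⟩ := (hιπ a).mp ha
  rw [← map_smul, hM, map_zero]

end IsCornerTensor

theorem statement_0 (e : R) (he : IsIdempotentElem e)
    (N : Type u) [AddCommGroup N] [Module Rᵐᵒᵖ N] (hN : IsCornerTensor e N)
    (M : Type u) [AddCommGroup M] [Module Rᵐᵒᵖ M]
    -- M is annihilated by the two-sided ideal (e) = ReR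
    (hM : ∀ (m : M) (x : R), x ∈ TwoSidedIdeal.span ({e} : Set R) →
      MulOpposite.op x • m = 0)
    (i : ℕ) (hi : i = 0 ∨ i = 1) :
    Subsingleton (((Ext ℤ (ModuleCat Rᵐᵒᵖ) i).obj
      (Opposite.op (ModuleCat.of Rᵐᵒᵖ N))).obj (ModuleCat.of Rᵐᵒᵖ M)) := by
  have hMe : ∀ m : M, op e • m = 0 := fun m => hM m e (TwoSidedIdeal.subset_span rfl)
  refine ModuleCat.subsingleton_of_isZero ?_
  rcases hi with rfl | rfl
  · exact isZero_Ext_zero_of_forall_eq_zero fun f =>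
      ModuleCat.hom_ext (hN.hom_eq_zero he hMe f.hom)
  · exact ModuleCat.isZero_Ext_one_of_extensionsSplit (hN.extensionsSplit he hMe)
end

section
/- Let T be a triangulated category with Serre functor ν and let P be a silting subcategory of T. Then the following are equivalent: (a) Hom_T(ν(P), P[i]) = 0 for all i > d; (b) ν_d(T_{≥0}^P) ⊆ T_{≥0}^P; (c) ν_d^{−1}(T_{≤0}^P) ⊆ T_{≤0}^P; (d) Hom_T(ν_d^j(P), P[i]) = 0 for all i, j ≥ 1, where ν_d = ν∘[−d] and (T_{≥0}^P, T_{≤0}^P) is the co-t-structure associated to P. -/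
/-!
STATEMENT 6: Equivalent characterizations of d-silting subcategories: for a silting
subcategory P of a triangulated category T with Serre functor ν, the conditions
(a) Hom(ν(P), P[i]) = 0 for i > d, (b) ν_d(T_{≥0}^P) ⊆ T_{≥0}^P,
(c) ν_d^{-1}(T_{≤0}^P) ⊆ T_{≤0}^P, (d) Hom(ν_d^j(P), P[i]) = 0 for i, j ≥ 1
are equivalent.
-/

open CategoryTheory CategoryTheory.Limits CategoryTheory.Pretriangulated

universe w v u

variable (k : Type w) [Field k]
variable (C : Type u) [Category.{v} C] [Preadditive C] [Linear k C] [HasZeroObject C]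
  [HasShift C ℤ] [∀ n : ℤ, (CategoryTheory.shiftFunctor C n).Additive] [Pretriangulated C]
  [HasBinaryBiproducts C]

/-- A Serre functor on a k-linear category: an (additive) autoequivalence ν together
with functorial isomorphisms D Hom(X,Y) ≅ Hom(Y, νX). -/
structure SerreFunctor : Type (max (max u v) w) where
  ν : C ≌ C
  additive : ν.functor.Additive
  duality : ∀ X Y : C, (Y ⟶ ν.functor.obj X) ≃ₗ[k] Module.Dual k (X ⟶ Y)
  natural : ∀ (X Y X' Y' : C) (a : X ⟶ X') (b : Y' ⟶ Y) (f : Y ⟶ ν.functor.obj X),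
    duality X' Y' (b ≫ f ≫ ν.functor.map a) = fun g => duality X Y f (a ≫ g ≫ b)

variable {k C}

/-- ν_d = ν ∘ [-d]. -/
def nud (S : SerreFunctor k C) (d : ℕ) : C ⥤ C :=
  CategoryTheory.shiftFunctor C (-(d : ℤ)) ⋙ S.ν.functor

/-- The inverse of ν_d. -/
def nudInv (S : SerreFunctor k C) (d : ℕ) : C ⥤ C :=
  S.ν.inverse ⋙ CategoryTheory.shiftFunctor C (d : ℤ)


/-- Iteration of an endofunctor. -/
def iterObj (F : C ⥤ C) : ℕ → C → C
  | 0, X => X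
  | n + 1, X => F.obj (iterObj F n X)

/-- A thick subcategory: closed under isomorphisms, shifts, extensions and
direct summands. -/
structure IsThick (Z : Set C) : Prop where
  iso : ∀ {X Y : C}, (X ≅ Y) → X ∈ Z → Y ∈ Z
  shift : ∀ X ∈ Z, ∀ n : ℤ, X⟦n⟧ ∈ Z
  ext₂ : ∀ T ∈ distTriang C, T.obj₁ ∈ Z → T.obj₃ ∈ Z → T.obj₂ ∈ Z
  summand : ∀ X Y : C, [HasBinaryBiproduct X Y] → (X ⊞ Y) ∈ Z → X ∈ Z

/-- `S` generates `C` as a thick subcategory: `thick S = C`. -/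
def GeneratesThick (S : Set C) : Prop :=
  ∀ Z : Set C, IsThick Z → S ⊆ Z → ∀ X : C, X ∈ Z

/-- A presilting subcategory: Hom(P, P[i]) = 0 for all i ≥ 1. -/
def IsPresiltingSet (P : Set C) : Prop :=
  ∀ A ∈ P, ∀ B ∈ P, ∀ i : ℤ, 1 ≤ i → ∀ f : A ⟶ B⟦i⟧, f = 0

/-- A silting subcategory: presilting and generating C as a thick subcategory. -/
def IsSiltingSet (P : Set C) : Prop := IsPresiltingSet P ∧ GeneratesThick P

/-- The coaisle T_{≥0}^P = ^⊥(P[>0]) of the co-t-structure associated to P. -/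
def coAisleGE (P : Set C) : Set C :=
  {X | ∀ A ∈ P, ∀ i : ℤ, 1 ≤ i → ∀ f : X ⟶ A⟦i⟧, f = 0}

/-- The aisle T_{≤0}^P = (P[<0])^⊥ of the co-t-structure associated to P. -/
def coAisleLE (P : Set C) : Set C :=
  {X | ∀ A ∈ P, ∀ i : ℤ, 1 ≤ i → ∀ f : A⟦-i⟧ ⟶ X, f = 0}


/-!
The silting subcategory `P` determines a co-t-structure whose halves are orthogonal:
`Hom(T_{≥0}^P, T_{≤0}^P[1]) = 0`. Up to a direct summand, every object `W` sits in a triangle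
`E → W → F → E[1]` with `E ∈ ^⊥(T_{≤0}^P[1])` and `F ∈ (T_{≥0}^P)^⊥`: such triangles exist for
the shifts of objects of `P`, and they glue along distinguished triangles by a four-lemma chase on
`Hom(X, -)`, which needs no octahedral axiom. For `W = X ∈ T_{≥0}^P` the map `X → F` vanishes, so
every map from `X` to `T_{≤0}^P[1]` factors through `E` and is zero.

Given this orthogonality, `T_{≥0}^P` and `T_{≤0}^P[1]` are each other's orthogonals. Serre
duality shows that `Hom(ν_d X, Y[m])` vanishes iff `Hom(X, (ν_d⁻¹ Y)[m])` does, so (b) and (c)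
are equivalent formally. Condition (a) says `ν_d P ⊆ T_{≥0}^P`; by the same adjunction it puts
`ν_d⁻¹(P[≥1])` into `T_{≤0}^P[1]`, so (b) follows by orthogonality. Finally, (d) is (b) iterated
on `P`, and its case `j = 1` is (a).
-/

open ZeroObject

set_option linter.unusedSectionVars false

section HomVanishes

variable {D : Type*} [Category D] [HasZeroMorphisms D]

def HomVanishes (X Y : D) : Prop := ∀ f : X ⟶ Y, f = 0

lemma homVanishes_iff_subsingleton {X Y : D} : HomVanishes X Y ↔ Subsingleton (X ⟶ Y) :=
  ⟨fun h => ⟨fun f g => (h f).trans (h g).symm⟩, fun _ f => Subsingleton.elim f 0⟩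

lemma homVanishes_congr {X Y X' Y' : D} (e : (X ⟶ Y) ≃ (X' ⟶ Y')) :
    HomVanishes X Y ↔ HomVanishes X' Y' := by
  simp only [homVanishes_iff_subsingleton, e.subsingleton_congr]

lemma homVanishes_congr_left {X X' Y : D} (e : X ≅ X') : HomVanishes X Y ↔ HomVanishes X' Y :=
  homVanishes_congr (e.homCongr (Iso.refl Y))

lemma homVanishes_congr_right {X Y Y' : D} (e : Y ≅ Y') : HomVanishes X Y ↔ HomVanishes X Y' :=
  homVanishes_congr ((Iso.refl X).homCongr e)

variable [HasShift D ℤ] {X Y : D}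

lemma homVanishes_shift_left_iff (a : ℤ) : HomVanishes (X⟦a⟧) Y ↔ HomVanishes X (Y⟦-a⟧) :=
  homVanishes_congr ((shiftEquiv D a).toAdjunction.homEquiv X Y)

lemma homVanishes_shift_right_iff (a : ℤ) : HomVanishes X (Y⟦a⟧) ↔ HomVanishes (X⟦-a⟧) Y :=
  homVanishes_congr ((shiftEquiv D a).symm.toAdjunction.homEquiv X Y).symm

lemma homVanishes_shift_shift_iff (a b : ℤ) :
    HomVanishes (X⟦a⟧) (Y⟦b⟧) ↔ HomVanishes X (Y⟦b - a⟧) := by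
  rw [homVanishes_shift_left_iff]
  exact homVanishes_congr_right ((shiftFunctorAdd' D b (-a) (b - a) (by omega)).symm.app Y)

end HomVanishes

namespace CategoryTheory.Pretriangulated.Triangle

variable {D : Type*} [Category D] [Preadditive D] [HasZeroObject D] [HasShift D ℤ]
  [∀ n : ℤ, (CategoryTheory.shiftFunctor D n).Additive] [Pretriangulated D] {X : D}

lemma coyoneda_exact₂_shift (T : Triangle D) (hT : T ∈ distTriang D)
    (f : X ⟶ T.obj₂⟦(1 : ℤ)⟧) (hf : f ≫ T.mor₂⟦(1 : ℤ)⟧' = 0) :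
    ∃ g : X ⟶ T.obj₁⟦(1 : ℤ)⟧, f = g ≫ T.mor₁⟦(1 : ℤ)⟧' := by
  obtain ⟨g, hg⟩ : ∃ g : X ⟶ T.obj₁⟦(1 : ℤ)⟧, f = g ≫ (-(T.mor₁⟦(1 : ℤ)⟧')) :=
    coyoneda_exact₂ _ (rot_of_distTriang _ (rot_of_distTriang _ (rot_of_distTriang _ hT))) f
      (by change f ≫ (-(T.mor₂⟦(1 : ℤ)⟧')) = 0; rw [Preadditive.comp_neg, hf, neg_zero])
  exact ⟨-g, by rw [hg, Preadditive.comp_neg, Preadditive.neg_comp]⟩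

lemma exists_comp_mor₁_eq (T : Triangle D) (hT : T ∈ distTriang D)
    (h : HomVanishes X T.obj₃) (u : X ⟶ T.obj₂) : ∃ p, p ≫ T.mor₁ = u :=
  (coyoneda_exact₂ T hT u (h _)).imp fun _ hp => hp.symm

lemma eq_zero_of_comp_shift_mor₁_eq_zero (T : Triangle D) (hT : T ∈ distTriang D)
    (h : HomVanishes X T.obj₃) (p : X ⟶ T.obj₁⟦(1 : ℤ)⟧) (hp : p ≫ T.mor₁⟦(1 : ℤ)⟧' = 0) :
    p = 0 := by
  obtain ⟨g, rfl⟩ := coyoneda_exact₁ T hT p hp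
  rw [h g, zero_comp]

lemma homVanishes_obj₃ (T : Triangle D) (hT : T ∈ distTriang D)
    (hsurj : ∀ u : X ⟶ T.obj₂, ∃ p, p ≫ T.mor₁ = u)
    (hinj : ∀ p : X ⟶ T.obj₁⟦(1 : ℤ)⟧, p ≫ T.mor₁⟦(1 : ℤ)⟧' = 0 → p = 0) :
    HomVanishes X T.obj₃ := by
  intro w
  obtain ⟨v, rfl⟩ := coyoneda_exact₃ T hT w
    (hinj _ (by rw [Category.assoc, comp_distTriang_mor_zero₃₁ T hT, comp_zero]))
  obtain ⟨p, rfl⟩ := hsurj v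
  rw [Category.assoc, comp_distTriang_mor_zero₁₂ T hT, comp_zero]

end CategoryTheory.Pretriangulated.Triangle

namespace CategoryTheory.Pretriangulated.TriangleMorphism

variable {D : Type*} [Category D] [Preadditive D] [HasZeroObject D] [HasShift D ℤ]
  [∀ n : ℤ, (CategoryTheory.shiftFunctor D n).Additive] [Pretriangulated D]
  {T T' : Triangle D} (φ : T ⟶ T') {X : D}

/-! The two halves of the four lemma for the long exact sequences of `Hom(X, -)`. -/

lemma exists_comp_hom₂_eq (hT : T ∈ distTriang D) (hT' : T' ∈ distTriang D)
    (h₁ : ∀ u : X ⟶ T'.obj₁, ∃ p, p ≫ φ.hom₁ = u)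
    (h₃ : ∀ u : X ⟶ T'.obj₃, ∃ p, p ≫ φ.hom₃ = u)
    (h₁' : ∀ p : X ⟶ T.obj₁⟦(1 : ℤ)⟧, p ≫ φ.hom₁⟦(1 : ℤ)⟧' = 0 → p = 0)
    (u : X ⟶ T'.obj₂) : ∃ p, p ≫ φ.hom₂ = u := by
  obtain ⟨v, hv⟩ := h₃ (u ≫ T'.mor₂)
  obtain ⟨w, rfl⟩ := Triangle.coyoneda_exact₃ T hT v (h₁' _ (by
    rw [Category.assoc, φ.comm₃, reassoc_of% hv, comp_distTriang_mor_zero₂₃ _ hT', comp_zero]))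
  obtain ⟨t, ht⟩ := Triangle.coyoneda_exact₂ T' hT' (u - w ≫ φ.hom₂) (by
    rw [Preadditive.sub_comp, ← hv, Category.assoc, Category.assoc, φ.comm₂, sub_self])
  obtain ⟨t', rfl⟩ := h₁ t
  refine ⟨w + t' ≫ T.mor₁, ?_⟩
  rw [Preadditive.add_comp, Category.assoc, φ.comm₁, ← Category.assoc, ← ht, add_sub_cancel]

lemma eq_zero_of_comp_shift_hom₂_eq_zero (hT : T ∈ distTriang D) (hT' : T' ∈ distTriang D)
    (h₃ : ∀ u : X ⟶ T'.obj₃, ∃ p, p ≫ φ.hom₃ = u)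
    (h₁' : ∀ p : X ⟶ T.obj₁⟦(1 : ℤ)⟧, p ≫ φ.hom₁⟦(1 : ℤ)⟧' = 0 → p = 0)
    (h₃' : ∀ p : X ⟶ T.obj₃⟦(1 : ℤ)⟧, p ≫ φ.hom₃⟦(1 : ℤ)⟧' = 0 → p = 0)
    (κ : X ⟶ T.obj₂⟦(1 : ℤ)⟧) (hκ : κ ≫ φ.hom₂⟦(1 : ℤ)⟧' = 0) : κ = 0 := by
  obtain ⟨g, rfl⟩ := T.coyoneda_exact₂_shift hT κ (h₃' _ (by
    rw [Category.assoc, ← Functor.map_comp, φ.comm₂, Functor.map_comp, reassoc_of% hκ,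
      zero_comp]))
  obtain ⟨h, hh⟩ := T'.coyoneda_exact₁ hT' (g ≫ φ.hom₁⟦(1 : ℤ)⟧') (by
    rw [Category.assoc, ← Functor.map_comp, ← φ.comm₁, Functor.map_comp, ← Category.assoc, hκ])
  obtain ⟨h', rfl⟩ := h₃ h
  have hg : g = h' ≫ T.mor₃ := by
    rw [← sub_eq_zero]
    refine h₁' _ ?_
    rw [Preadditive.sub_comp, hh, Category.assoc, Category.assoc, φ.comm₃, sub_self]
  rw [hg, Category.assoc, comp_distTriang_mor_zero₃₁ T hT, comp_zero]

end CategoryTheory.Pretriangulated.TriangleMorphism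

section BiprodTriangle

variable {D : Type*} [Category D] [Preadditive D] [HasZeroObject D] [HasShift D ℤ]
  [∀ n : ℤ, (CategoryTheory.shiftFunctor D n).Additive] [Pretriangulated D]

noncomputable def piWalkingPairIso (f : WalkingPair → D) [HasProduct f] :
    ∏ᶜ f ≅ f .left ⊞ f .right where
  hom := biprod.lift (Pi.π f .left) (Pi.π f .right)
  inv := Pi.lift fun j => WalkingPair.casesOn j biprod.fst biprod.snd
  hom_inv_id := by
    apply Limits.Pi.hom_ext
    rintro (_ | _) <;> simp
  inv_hom_id := by
    apply biprod.hom_ext <;> simp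

lemma exists_distTriang_biprod (T₁ T₂ : Triangle D) (h₁ : T₁ ∈ distTriang D)
    (h₂ : T₂ ∈ distTriang D) :
    ∃ T ∈ distTriang D, Nonempty (T.obj₁ ≅ T₁.obj₁ ⊞ T₂.obj₁) ∧
      Nonempty (T.obj₂ ≅ T₁.obj₂ ⊞ T₂.obj₂) ∧ Nonempty (T.obj₃ ≅ T₁.obj₃ ⊞ T₂.obj₃) :=
  ⟨productTriangle (pairFunction T₁ T₂),
    productTriangle_distinguished _ (by rintro (_ | _) <;> assumption),
    ⟨piWalkingPairIso _⟩, ⟨piWalkingPairIso _⟩, ⟨piWalkingPairIso _⟩⟩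

end BiprodTriangle

section CoTStructure

variable {P : Set C}

/-- `(P[≤0])^⊥ = T_{≤0}^P[1]`. -/
def coAisleLT (P : Set C) : ObjectProperty C :=
  fun Z => ∀ A ∈ P, ∀ j : ℤ, j ≤ 0 → HomVanishes (A⟦j⟧) Z

lemma subset_coAisleGE (hpre : IsPresiltingSet P) : P ⊆ coAisleGE P :=
  fun A hA => hpre A hA

lemma shift_mem_coAisleGE {X : C} (hX : X ∈ coAisleGE P) {m : ℤ} (hm : m ≤ 0) :
    X⟦m⟧ ∈ coAisleGE P :=
  fun B hB i hi => (homVanishes_shift_shift_iff m i).2 (hX B hB (i - m) (by omega))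

lemma shift_mem_coAisleLE (hpre : IsPresiltingSet P) {B : C} (hB : B ∈ P) {m : ℤ}
    (hm : 0 ≤ m) : B⟦m⟧ ∈ coAisleLE P :=
  fun A hA i _ => (homVanishes_shift_shift_iff (-i) m).2 (hpre A hA B hB (m - -i) (by omega))

lemma coAisleLT_shift_of_mem_coAisleLE {Z : C} (hZ : Z ∈ coAisleLE P) :
    coAisleLT P (Z⟦(1 : ℤ)⟧) := by
  intro A hA j hj
  refine (homVanishes_shift_right_iff 1).2 ((homVanishes_congr_left
    ((shiftFunctorAdd' C j (-1) (-(1 - j)) (by omega)).app A)).1 ?_)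
  exact hZ A hA (1 - j) (by omega)

lemma coAisleLT_shift_of_rightOrthogonal (hpre : IsPresiltingSet P) {F : C}
    (hF : ObjectProperty.rightOrthogonal (· ∈ coAisleGE P) F) : coAisleLT P (F⟦(1 : ℤ)⟧) :=
  fun A hA j hj => (homVanishes_shift_right_iff 1).2 fun g =>
    hF g (shift_mem_coAisleGE (shift_mem_coAisleGE (subset_coAisleGE hpre hA) hj) (by omega))

def HasWeightDecomposition (P : Set C) (W : C) : Prop :=
  ∃ (E F : C) (e : E ⟶ W) (ρ : W ⟶ F) (δ : F ⟶ E⟦(1 : ℤ)⟧), Triangle.mk e ρ δ ∈ distTriang C ∧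
    (coAisleLT P).leftOrthogonal E ∧ ObjectProperty.rightOrthogonal (· ∈ coAisleGE P) F

lemma HasWeightDecomposition.of_iso {W W' : C} (h : HasWeightDecomposition P W) (i : W ≅ W') :
    HasWeightDecomposition P W' := by
  obtain ⟨E, F, e, ρ, δ, hD, hE, hF⟩ := h
  refine ⟨E, F, e ≫ i.hom, i.inv ≫ ρ, δ, isomorphic_distinguished _ hD _ ?_, hE, hF⟩
  exact Triangle.isoMk _ _ (Iso.refl _) i.symm (Iso.refl _)
    (by simp [Triangle.mk]) (by simp [Triangle.mk]) (by simp [Triangle.mk])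

lemma hasWeightDecomposition_shift {A : C} (hA : A ∈ P) (n : ℤ) :
    HasWeightDecomposition P (A⟦n⟧) := by
  rcases le_or_gt n 0 with hn | hn
  · exact ⟨A⟦n⟧, 0, 𝟙 _, 0, 0, contractible_distinguished _, fun _ f hY => hY A hA n hn f,
      fun _ f _ => (isZero_zero C).eq_of_tgt f 0⟩
  · exact ⟨0, A⟦n⟧, 0, 𝟙 _, 0, contractible_distinguished₁ _,
      fun _ f _ => (isZero_zero C).eq_of_src f 0, fun _ f hX => hX A hA n (by omega) f⟩

lemma HasWeightDecomposition.of_distTriang (hpre : IsPresiltingSet P) (R : Triangle C)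
    (hR : R ∈ distTriang C) (h₁ : HasWeightDecomposition P R.obj₁)
    (h₃ : HasWeightDecomposition P R.obj₃) : HasWeightDecomposition P R.obj₂ := by
  obtain ⟨E₁, F₁, e₁, ρ₁, δ₁, hD₁, hE₁, hF₁⟩ := h₁
  obtain ⟨E₃, F₃, e₃, ρ₃, δ₃, hD₃, hE₃, hF₃⟩ := h₃
  obtain ⟨γ, hγ⟩ := Triangle.coyoneda_exact₂_shift _ hD₁ (e₃ ≫ R.mor₃)
    (hE₃ _ (coAisleLT_shift_of_rightOrthogonal hpre hF₁))
  obtain ⟨E₂, x, y, hT₂⟩ := distinguished_cocone_triangle₂ γ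
  obtain ⟨η, hη₁, hη₂⟩ := complete_distinguished_triangle_morphism₂ _ R hT₂ hR e₁ e₃ hγ.symm
  obtain ⟨F₂, ρ₂, δ₂, hD₂⟩ := distinguished_cocone_triangle η
  refine ⟨E₂, F₂, η, ρ₂, δ₂, hD₂, (coAisleLT P).leftOrthogonal.ext_of_isTriangulatedClosed₂ _
    hT₂ hE₁ hE₃, fun X f hX => ?_⟩
  -- For `X ∈ coAisleGE P` we have `Hom(X, F₁) = Hom(X, F₃) = 0`, so `e₁` and `e₃` are surjective
  -- on `Hom(X, -)` and injective on `Hom(X, -⟦1⟧)`; the four lemma transfers this to `η`.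
  let φ : Triangle.mk x y γ ⟶ R := Triangle.homMk _ _ e₁ η e₃ hη₁ hη₂ hγ.symm
  have hX₁ : HomVanishes X F₁ := fun g => hF₁ g hX
  have hX₃ : HomVanishes X F₃ := fun g => hF₃ g hX
  have surj₁ := Triangle.exists_comp_mor₁_eq _ hD₁ hX₁
  have surj₃ := Triangle.exists_comp_mor₁_eq _ hD₃ hX₃
  have inj₁ := Triangle.eq_zero_of_comp_shift_mor₁_eq_zero _ hD₁ hX₁
  have inj₃ := Triangle.eq_zero_of_comp_shift_mor₁_eq_zero _ hD₃ hX₃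
  exact Triangle.homVanishes_obj₃ _ hD₂ (φ.exists_comp_hom₂_eq hT₂ hR surj₁ surj₃ inj₁)
    (φ.eq_zero_of_comp_shift_hom₂_eq_zero hT₂ hR surj₃ inj₁ inj₃) f

/-- Shifts and a complement `V` are allowed so that these objects form a thick subcategory. -/
def HasShiftedWeightDecompositions (P : Set C) (W : C) : Prop :=
  ∀ n : ℤ, ∃ V : C, HasWeightDecomposition P (W⟦n⟧ ⊞ V)

lemma isThick_hasShiftedWeightDecompositions (hpre : IsPresiltingSet P) :
    IsThick {W : C | HasShiftedWeightDecompositions P W} where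
  iso e h n := (h n).imp fun V hV =>
    hV.of_iso (biprod.mapIso ((CategoryTheory.shiftFunctor C n).mapIso e) (Iso.refl V))
  shift X h m n := (h (m + n)).imp fun V hV =>
    hV.of_iso (biprod.mapIso ((shiftFunctorAdd C m n).app X) (Iso.refl V))
  ext₂ T hT h₁ h₃ n := by
    obtain ⟨V₁, hV₁⟩ := h₁ n
    obtain ⟨V₃, hV₃⟩ := h₃ n
    obtain ⟨S, hS, ⟨i₁⟩, ⟨i₂⟩, ⟨i₃⟩⟩ := exists_distTriang_biprod _ (binaryBiproductTriangle V₁ V₃)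
      (Triangle.shift_distinguished T hT n) (binaryBiproductTriangle_distinguished V₁ V₃)
    exact ⟨V₁ ⊞ V₃, (HasWeightDecomposition.of_distTriang hpre S hS (hV₁.of_iso i₁.symm)
      (hV₃.of_iso i₃.symm)).of_iso i₂⟩
  summand X Y _ h n := by
    obtain ⟨V, hV⟩ := h n
    have := preservesBinaryBiproducts_of_preservesBiproducts (CategoryTheory.shiftFunctor C n)
    exact ⟨Y⟦n⟧ ⊞ V, hV.of_iso (biprod.mapIso ((CategoryTheory.shiftFunctor C n).mapBiprod X Y)
      (Iso.refl V) ≪≫ biprod.associator _ _ _)⟩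

theorem homVanishes_of_mem_coAisleGE_of_coAisleLT (hP : IsSiltingSet P) {X Z : C}
    (hX : X ∈ coAisleGE P) (hZ : coAisleLT P Z) : HomVanishes X Z := by
  obtain ⟨V, E, F, e, ρ, δ, hD, hE, hF⟩ := hP.2 _ (isThick_hasShiftedWeightDecompositions hP.1)
    (fun A hA n => ⟨0, (hasWeightDecomposition_shift hA n).of_iso (isoBiprodZero (isZero_zero C))⟩)
    X 0
  let ι : X ⟶ X⟦(0 : ℤ)⟧ ⊞ V := (shiftFunctorZero C ℤ).inv.app X ≫ biprod.inl
  obtain ⟨s, hs⟩ : ∃ s : X ⟶ E, ι = s ≫ e :=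
    Triangle.coyoneda_exact₂ _ hD ι (hF (ι ≫ ρ) hX)
  intro f
  calc f = ι ≫ biprod.fst ≫ (shiftFunctorZero C ℤ).hom.app X ≫ f := by simp [ι]
    _ = s ≫ e ≫ biprod.fst ≫ (shiftFunctorZero C ℤ).hom.app X ≫ f := by
      rw [hs, Category.assoc]
    _ = 0 := by rw [hE (e ≫ biprod.fst ≫ (shiftFunctorZero C ℤ).hom.app X ≫ f) hZ, comp_zero]

lemma mem_coAisleGE_iff (hP : IsSiltingSet P) {X : C} :
    X ∈ coAisleGE P ↔ ∀ Z ∈ coAisleLE P, HomVanishes X (Z⟦(1 : ℤ)⟧) :=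
  ⟨fun hX _ hZ => homVanishes_of_mem_coAisleGE_of_coAisleLT hP hX
      (coAisleLT_shift_of_mem_coAisleLE hZ),
    fun h B hB i hi => (homVanishes_congr_right
      ((shiftFunctorAdd' C (i - 1) 1 i (by omega)).app B).symm).1
      (h _ (shift_mem_coAisleLE hP.1 hB (by omega)))⟩

lemma mem_coAisleLE_iff (hP : IsSiltingSet P) {Z : C} :
    Z ∈ coAisleLE P ↔ ∀ X ∈ coAisleGE P, HomVanishes X (Z⟦(1 : ℤ)⟧) :=
  ⟨fun hZ _ hX => homVanishes_of_mem_coAisleGE_of_coAisleLT hP hX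
      (coAisleLT_shift_of_mem_coAisleLE hZ),
    fun h A hA i _ => (homVanishes_congr_left
      ((shiftFunctorAdd' C (1 - i) (-1) (-i) (by omega)).app A).symm).1
      ((homVanishes_shift_right_iff 1).1
        (h _ (shift_mem_coAisleGE (subset_coAisleGE hP.1 hA) (by omega))))⟩

end CoTStructure

namespace SerreFunctor

variable (S : SerreFunctor k C) {X Y : C}

lemma homVanishes_functor_obj_iff : HomVanishes Y (S.ν.functor.obj X) ↔ HomVanishes X Y := by
  rw [homVanishes_iff_subsingleton, homVanishes_iff_subsingleton,
    (S.duality X Y).toEquiv.subsingleton_congr, Module.subsingleton_dual_iff]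

lemma homVanishes_inverse_obj_iff :
    HomVanishes (S.ν.inverse.obj Y) X ↔ HomVanishes Y (S.ν.functor.obj X) :=
  homVanishes_congr (S.ν.symm.toAdjunction.homEquiv Y X)

lemma homVanishes_functor_obj_shift_iff (m : ℤ) :
    HomVanishes (S.ν.functor.obj X) (Y⟦m⟧) ↔ HomVanishes X ((S.ν.inverse.obj Y)⟦m⟧) :=
  calc HomVanishes (S.ν.functor.obj X) (Y⟦m⟧)
      ↔ HomVanishes ((S.ν.functor.obj X)⟦-m⟧) Y := homVanishes_shift_right_iff m
    _ ↔ HomVanishes Y (S.ν.functor.obj ((S.ν.functor.obj X)⟦-m⟧)) :=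
      S.homVanishes_functor_obj_iff.symm
    _ ↔ HomVanishes (S.ν.inverse.obj Y) ((S.ν.functor.obj X)⟦-m⟧) :=
      S.homVanishes_inverse_obj_iff.symm
    _ ↔ HomVanishes ((S.ν.inverse.obj Y)⟦m⟧) (S.ν.functor.obj X) :=
      (homVanishes_shift_left_iff m).symm
    _ ↔ HomVanishes X ((S.ν.inverse.obj Y)⟦m⟧) := S.homVanishes_functor_obj_iff

end SerreFunctor

section Nud

variable (S : SerreFunctor k C) (d : ℕ) {P : Set C} {X Y : C}

lemma homVanishes_nud_obj_shift_iff (m : ℤ) :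
    HomVanishes ((nud S d).obj X) (Y⟦m⟧) ↔ HomVanishes (S.ν.functor.obj X) (Y⟦m + d⟧) := by
  change HomVanishes (S.ν.functor.obj (X⟦-(d : ℤ)⟧)) _ ↔ _
  rw [S.homVanishes_functor_obj_shift_iff, homVanishes_shift_shift_iff,
    S.homVanishes_functor_obj_shift_iff, sub_neg_eq_add]

lemma homVanishes_nud_obj_shift_iff_nudInv (m : ℤ) :
    HomVanishes ((nud S d).obj X) (Y⟦m⟧) ↔ HomVanishes X (((nudInv S d).obj Y)⟦m⟧) := by
  rw [homVanishes_nud_obj_shift_iff, S.homVanishes_functor_obj_shift_iff]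
  exact homVanishes_congr_right ((shiftFunctorAdd' C (d : ℤ) m (m + d) (by omega)).app _)

lemma nud_obj_mem_coAisleGE_iff {A : C} : (nud S d).obj A ∈ coAisleGE P ↔
    ∀ B ∈ P, ∀ i : ℤ, (d : ℤ) < i → HomVanishes (S.ν.functor.obj A) (B⟦i⟧) := by
  refine forall₂_congr fun B _ => ⟨fun h i hi => ?_,
    fun h i hi => (homVanishes_nud_obj_shift_iff S d i).2 (h _ (by omega))⟩
  simpa using (homVanishes_nud_obj_shift_iff S d (i - d)).1 (h _ (by omega))

lemma mapsTo_nud_coAisleGE_of_mapsTo (hP : IsSiltingSet P)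
    (h : Set.MapsTo (nud S d).obj P (coAisleGE P)) :
    Set.MapsTo (nud S d).obj (coAisleGE P) (coAisleGE P) := by
  intro X hX B hB i _
  refine (homVanishes_nud_obj_shift_iff_nudInv S d i).2
    (homVanishes_of_mem_coAisleGE_of_coAisleLT hP hX fun A hA j hj => ?_)
  rw [homVanishes_shift_shift_iff, ← homVanishes_nud_obj_shift_iff_nudInv]
  exact h hA B hB (i - j) (by omega)

lemma mapsTo_nud_coAisleGE_iff (hP : IsSiltingSet P) :
    Set.MapsTo (nud S d).obj (coAisleGE P) (coAisleGE P) ↔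
      Set.MapsTo (nudInv S d).obj (coAisleLE P) (coAisleLE P) := by
  constructor
  · intro h Z hZ
    rw [mem_coAisleLE_iff hP]
    intro X hX
    rw [← homVanishes_nud_obj_shift_iff_nudInv]
    exact (mem_coAisleGE_iff hP).1 (h hX) Z hZ
  · intro h X hX
    rw [mem_coAisleGE_iff hP]
    intro Z hZ
    rw [homVanishes_nud_obj_shift_iff_nudInv]
    exact (mem_coAisleGE_iff hP).1 hX _ (h hZ)

end Nud

lemma iterObj_eq_iterate (F : C ⥤ C) (n : ℕ) : iterObj F n = F.obj^[n] := by
  induction n with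
  | zero => rfl
  | succ n ih => funext X; rw [Function.iterate_succ_apply', ← ih]; rfl

theorem statement_6 (S : SerreFunctor k C) (d : ℕ)
    (P : Set C) (hP : IsSiltingSet P) :
    ((∀ A ∈ P, ∀ B ∈ P, ∀ i : ℤ, (d : ℤ) < i → ∀ f : S.ν.functor.obj A ⟶ B⟦i⟧, f = 0) ↔
        (∀ X ∈ coAisleGE P, (nud S d).obj X ∈ coAisleGE P)) ∧
    ((∀ X ∈ coAisleGE P, (nud S d).obj X ∈ coAisleGE P) ↔
        (∀ X ∈ coAisleLE P, (nudInv S d).obj X ∈ coAisleLE P)) ∧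
    ((∀ X ∈ coAisleLE P, (nudInv S d).obj X ∈ coAisleLE P) ↔
        (∀ A ∈ P, ∀ B ∈ P, ∀ i j : ℕ, 1 ≤ i → 1 ≤ j →
          ∀ f : iterObj (nud S d) j A ⟶ B⟦(i : ℤ)⟧, f = 0)) := by
  have hGE : P ⊆ coAisleGE P := subset_coAisleGE hP.1
  have hb : Set.MapsTo (nud S d).obj (coAisleGE P) (coAisleGE P) ↔
      Set.MapsTo (nud S d).obj P (coAisleGE P) :=
    ⟨fun h => h.mono_left hGE, mapsTo_nud_coAisleGE_of_mapsTo S d hP⟩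
  have ha : (∀ A ∈ P, ∀ B ∈ P, ∀ i : ℤ, (d : ℤ) < i → ∀ f : S.ν.functor.obj A ⟶ B⟦i⟧, f = 0) ↔
      Set.MapsTo (nud S d).obj P (coAisleGE P) :=
    forall₂_congr fun _ _ => (nud_obj_mem_coAisleGE_iff S d).symm
  have hd : (∀ A ∈ P, ∀ B ∈ P, ∀ i j : ℕ, 1 ≤ i → 1 ≤ j →
        ∀ f : iterObj (nud S d) j A ⟶ B⟦(i : ℤ)⟧, f = 0) ↔
      Set.MapsTo (nud S d).obj P (coAisleGE P) := by
    refine ⟨fun h A hA B hB i hi => ?_, fun h A hA B hB i j hi _ => ?_⟩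
    · obtain ⟨n, rfl⟩ := Int.eq_ofNat_of_zero_le (by omega : 0 ≤ i)
      exact h A hA B hB n 1 (by omega) le_rfl
    · rw [iterObj_eq_iterate]
      exact ((hb.2 h).iterate j) (hGE hA) B hB i (by omega)
  exact ⟨ha.trans hb.symm, mapsTo_nud_coAisleGE_iff S d hP,
    (mapsTo_nud_coAisleGE_iff S d hP).symm.trans (hb.trans hd.symm)⟩
end

section
/- Let T be a triangulated category with Serre functor ν, d ≥ 1, and P a d-silting subcategory of T. Then the subcategory U_d(P) := add{ν_d^i(P) : i ∈ ℤ, P ∈ P} is d-rigid, i.e., Hom_T(U_d(P), U_d(P)[j]) = 0 for all 1 ≤ j ≤ d−1. -/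
/-!
STATEMENT 7: If P is a d-silting subcategory of a k-linear Hom-finite triangulated
category T with Serre functor ν (i.e. P is silting and Hom(ν_d^j(P), P[i]) = 0 for
all i, j ≥ 1), then U_d(P) = add{ν_d^i(P) : i ∈ ℤ, P ∈ P} is d-rigid.
-/

open CategoryTheory CategoryTheory.Limits CategoryTheory.Pretriangulated

universe w v u

variable (k : Type w) [Field k]
variable (C : Type u) [Category.{v} C] [Preadditive C] [Linear k C] [HasZeroObject C]
  [HasShift C ℤ] [∀ n : ℤ, (CategoryTheory.shiftFunctor C n).Additive] [Pretriangulated C]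
  [HasBinaryBiproducts C]

variable {k C}

/-- Objects obtained as finite direct sums of objects of `S`. -/
inductive sums (S : Set C) : C → Prop
  | of {X : C} : X ∈ S → sums S X
  | biprod {X Y : C} : sums S X → sums S Y → sums S (X ⊞ Y)

/-- The additive closure `add S`. -/
def addSet (S : Set C) : Set C :=
  {X | ∃ Y Z : C, sums S Y ∧ Nonempty (Y ≅ X ⊞ Z)}

/-- The ν_d-orbit of an object (closed under isomorphism). -/
def nudOrbit (S : SerreFunctor k C) (d : ℕ) (X : C) : Set C :=
  {Y | ∃ n : ℕ, Nonempty (Y ≅ iterObj (nud S d) n X) ∨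
    Nonempty (Y ≅ iterObj (nudInv S d) n X)}

/-- U_d(P) = add { ν_d^i(A) : i ∈ ℤ, A ∈ P }. -/
def UdSet (S : SerreFunctor k C) (d : ℕ) (P : Set C) : Set C :=
  addSet (⋃ A ∈ P, nudOrbit S d A)

/-!
Write `R(X, Y)` for the vanishing of `Hom(X, Y[i])` for all `1 ≤ i ≤ d - 1`. Serre duality
`Hom(X, ν_d Y[i]) ≅ D Hom(Y, X[d - i])` gives `R(X, ν_d Y) ↔ R(Y, X)`, so applying it twice
shows that `R` is invariant under `ν_d` on both sides. Thus `R(ν_d^m A, ν_d^n B)` only depends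
on `m - n`; for `m ≥ n` it is the (d-)silting condition, and for `m < n` the flip
`R(ν_d^j A, B) ↔ R(ν_d^{-1} B, ν_d^j A)` reduces it to that case. Finally `R` passes to finite
direct sums and their summands.
-/

section Rigidity

variable {T : Type*} [Category T]

lemma CategoryTheory.Retract.subsingleton_hom {X X' Y Y' : T} (hX : Retract X X')
    (hY : Retract Y Y') [Subsingleton (X' ⟶ Y')] : Subsingleton (X ⟶ Y) :=
  ⟨fun f g => by
    have h : hX.r ≫ f ≫ hY.i = hX.r ≫ g ≫ hY.i := Subsingleton.elim _ _
    simpa using hX.i ≫= h =≫ hY.r⟩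

variable [HasShift T ℤ]

lemma subsingleton_hom_shift_iff {a b : ℤ} (h : a + b = 0) (X Y : T) :
    Subsingleton (X⟦a⟧ ⟶ Y) ↔ Subsingleton (X ⟶ Y⟦b⟧) :=
  ((shiftEquiv' T a b h).toAdjunction.homEquiv X Y).subsingleton_congr

def IsDRigidPair (d : ℕ) (X Y : T) : Prop :=
  ∀ i : ℤ, 1 ≤ i → i ≤ (d : ℤ) - 1 → Subsingleton (X ⟶ Y⟦i⟧)

namespace IsDRigidPair

variable {d : ℕ} {X X' Y Y' Z : T}

lemma of_retract (hX : Retract X X') (hY : Retract Y Y') (h : IsDRigidPair d X' Y') :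
    IsDRigidPair d X Y := fun i h₁ h₂ =>
  have := h i h₁ h₂
  hX.subsingleton_hom (hY.map (shiftFunctor T i))

lemma congr_iff (eX : X ≅ X') (eY : Y ≅ Y') : IsDRigidPair d X Y ↔ IsDRigidPair d X' Y' :=
  ⟨of_retract eX.symm.retract eY.symm.retract, of_retract eX.retract eY.retract⟩

variable [Preadditive T] [HasBinaryBiproducts T]

lemma biprod_left (hX : IsDRigidPair d X Y) (hZ : IsDRigidPair d Z Y) :
    IsDRigidPair d (X ⊞ Z) Y := fun i h₁ h₂ =>
  have := hX i h₁ h₂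
  have := hZ i h₁ h₂
  ⟨fun _ _ => biprod.hom_ext' _ _ (Subsingleton.elim _ _) (Subsingleton.elim _ _)⟩

lemma biprod_right (hY : IsDRigidPair d X Y) (hZ : IsDRigidPair d X Z) :
    IsDRigidPair d X (Y ⊞ Z) := fun i h₁ h₂ => by
  have := (subsingleton_hom_shift_iff (neg_add_cancel i) X Y).2 (hY i h₁ h₂)
  have := (subsingleton_hom_shift_iff (neg_add_cancel i) X Z).2 (hZ i h₁ h₂)
  exact (subsingleton_hom_shift_iff (neg_add_cancel i) X (Y ⊞ Z)).1
    ⟨fun _ _ => biprod.hom_ext _ _ (Subsingleton.elim _ _) (Subsingleton.elim _ _)⟩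

lemma of_sums {S : Set T} (h : ∀ U ∈ S, ∀ V ∈ S, IsDRigidPair d U V) {X Y : T}
    (hX : sums S X) (hY : sums S Y) : IsDRigidPair d X Y := by
  induction hX with
  | of hU =>
    induction hY with
    | of hV => exact h _ hU _ hV
    | biprod _ _ ih₁ ih₂ => exact biprod_right ih₁ ih₂
  | biprod _ _ ih₁ ih₂ => exact biprod_left ih₁ ih₂

lemma of_mem_addSet {S : Set T} (h : ∀ U ∈ S, ∀ V ∈ S, IsDRigidPair d U V)
    (hX : X ∈ addSet S) (hY : Y ∈ addSet S) : IsDRigidPair d X Y := by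
  obtain ⟨U, _, hU, ⟨eU⟩⟩ := hX
  obtain ⟨V, _, hV, ⟨eV⟩⟩ := hY
  exact of_retract ((BinaryBiproduct.bicone _ _).retract_left.trans eU.symm.retract)
    ((BinaryBiproduct.bicone _ _).retract_left.trans eV.symm.retract) (of_sums h hU hV)

end IsDRigidPair

end Rigidity

section Serre

variable {T : Type*} [Category T] [Preadditive T] [Linear k T] (S : SerreFunctor k T)

lemma SerreFunctor.subsingleton_hom_iff (X Y : T) :
    Subsingleton (Y ⟶ S.ν.functor.obj X) ↔ Subsingleton (X ⟶ Y) :=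
  (S.duality X Y).toEquiv.subsingleton_congr.trans (Module.subsingleton_dual_iff k)

variable [HasShift T ℤ] (d : ℕ)

lemma subsingleton_hom_nud_shift_iff (X Y : T) (i : ℤ) :
    Subsingleton (X ⟶ ((nud S d).obj Y)⟦i⟧) ↔ Subsingleton (Y ⟶ X⟦(d : ℤ) - i⟧) :=
  calc _ ↔ Subsingleton (X⟦-i⟧ ⟶ (nud S d).obj Y) :=
        (subsingleton_hom_shift_iff (neg_add_cancel i) _ _).symm
    _ ↔ Subsingleton (Y⟦-(d : ℤ)⟧ ⟶ X⟦-i⟧) := S.subsingleton_hom_iff _ _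
    _ ↔ Subsingleton (Y ⟶ X⟦-i⟧⟦(d : ℤ)⟧) := subsingleton_hom_shift_iff (neg_add_cancel _) _ _
    _ ↔ _ := ((Iso.refl Y).homCongr
        ((shiftFunctorAdd' T (-i) d (d - i) (by ring)).app X).symm).subsingleton_congr

lemma isDRigidPair_nud_right_iff (X Y : T) :
    IsDRigidPair d X ((nud S d).obj Y) ↔ IsDRigidPair d Y X := by
  -- `i ↦ d - i` is an involution of `[1, d - 1]`
  refine ⟨fun h i h₁ h₂ => ?_, fun h i h₁ h₂ => ?_⟩
  · have := (subsingleton_hom_nud_shift_iff S d X Y (d - i)).1 (h _ (by omega) (by omega))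
    rwa [sub_sub_cancel] at this
  · exact (subsingleton_hom_nud_shift_iff S d X Y i).2 (h _ (by omega) (by omega))

def nudCounitIso (X : T) : (nud S d).obj ((nudInv S d).obj X) ≅ X :=
  S.ν.functor.mapIso ((shiftFunctorCompIsoId T (d : ℤ) (-(d : ℤ)) (by ring)).app _) ≪≫
    S.ν.counitIso.app X

def nudPow : ℤ → T → T
  | (n : ℕ), X => iterObj (nud S d) n X
  | .negSucc n, X => iterObj (nudInv S d) (n + 1) X

def nudPowSuccIso : ∀ (n : ℤ) (X : T), nudPow S d (n + 1) X ≅ (nud S d).obj (nudPow S d n X)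
  | (n : ℕ), _ => Iso.refl _
  | .negSucc 0, X => (nudCounitIso S d X).symm
  | .negSucc (_ + 1), _ => (nudCounitIso S d _).symm

lemma isDRigidPair_nudPow_succ_right_iff (n : ℤ) (X Y : T) :
    IsDRigidPair d X (nudPow S d (n + 1) Y) ↔ IsDRigidPair d (nudPow S d n Y) X :=
  (IsDRigidPair.congr_iff (Iso.refl X) (nudPowSuccIso S d n Y)).trans
    (isDRigidPair_nud_right_iff S d _ _)

lemma isDRigidPair_nudPow_succ_iff (m n : ℤ) (X Y : T) :
    IsDRigidPair d (nudPow S d (m + 1) X) (nudPow S d (n + 1) Y) ↔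
      IsDRigidPair d (nudPow S d m X) (nudPow S d n Y) :=
  (isDRigidPair_nudPow_succ_right_iff S d n _ _).trans
    (isDRigidPair_nudPow_succ_right_iff S d m _ _)

lemma isDRigidPair_nudPow_add_iff (j m n : ℤ) (X Y : T) :
    IsDRigidPair d (nudPow S d (m + j) X) (nudPow S d (n + j) Y) ↔
      IsDRigidPair d (nudPow S d m X) (nudPow S d n Y) := by
  induction j using Int.induction_on with
  | zero => simp only [add_zero]
  | succ j ih => rw [← ih, ← add_assoc, ← add_assoc, isDRigidPair_nudPow_succ_iff]
  | pred j ih =>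
    rw [← ih, ← isDRigidPair_nudPow_succ_iff, add_sub_assoc', sub_add_cancel, add_sub_assoc',
      sub_add_cancel]

variable {S d} {P : Set T}

lemma isDRigidPair_iterObj_nud_of_dSilting (hP : IsPresiltingSet P)
    (hdsilt : ∀ A ∈ P, ∀ B ∈ P, ∀ i j : ℕ, 1 ≤ i → 1 ≤ j →
      ∀ f : iterObj (nud S d) j A ⟶ B⟦(i : ℤ)⟧, f = 0)
    (j : ℕ) {A B : T} (hA : A ∈ P) (hB : B ∈ P) :
    IsDRigidPair d (iterObj (nud S d) j A) B := by
  intro i h₁ _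
  lift i to ℕ using by omega
  refine subsingleton_of_forall_eq 0 fun f => ?_
  rcases j with _ | j
  · exact hP A hA B hB i h₁ f
  · exact hdsilt A hA B hB i (j + 1) (by exact_mod_cast h₁) (by omega) f

lemma isDRigidPair_nudPow_of_dSilting (hP : IsPresiltingSet P)
    (hdsilt : ∀ A ∈ P, ∀ B ∈ P, ∀ i j : ℕ, 1 ≤ i → 1 ≤ j →
      ∀ f : iterObj (nud S d) j A ⟶ B⟦(i : ℤ)⟧, f = 0)
    (m n : ℤ) {A B : T} (hA : A ∈ P) (hB : B ∈ P) :
    IsDRigidPair d (nudPow S d m A) (nudPow S d n B) := by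
  suffices h : ∀ j : ℤ, ∀ A ∈ P, ∀ B ∈ P, IsDRigidPair d (nudPow S d j A) (nudPow S d 0 B) by
    simpa only [sub_add_cancel, zero_add] using
      (isDRigidPair_nudPow_add_iff S d n (m - n) 0 A B).2 (h (m - n) A hA B hB)
  intro j A hA B hB
  rcases le_or_gt 0 j with hj | hj
  · lift j to ℕ using hj
    exact isDRigidPair_iterObj_nud_of_dSilting hP hdsilt j hA hB
  · obtain ⟨l, hl⟩ := Int.eq_ofNat_of_zero_le (by omega : 0 ≤ -1 - j)
    have h := (isDRigidPair_nudPow_add_iff S d j (-1 - j) 0 B A).2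
      (hl ▸ isDRigidPair_iterObj_nud_of_dSilting hP hdsilt l hB hA)
    rw [sub_add_cancel, zero_add] at h
    exact (isDRigidPair_nudPow_succ_right_iff S d (-1) _ _).2 h

lemma exists_iso_nudPow_of_mem_nudOrbit {X Y : T} (h : Y ∈ nudOrbit S d X) :
    ∃ n : ℤ, Nonempty (Y ≅ nudPow S d n X) := by
  obtain ⟨n, h | h⟩ := h
  · exact ⟨n, h⟩
  · rcases n with _ | n
    · exact ⟨0, h⟩
    · exact ⟨.negSucc n, h⟩

end Serre

theorem statement_7 [∀ X Y : C, FiniteDimensional k (X ⟶ Y)]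
    (S : SerreFunctor k C) (d : ℕ) (hd : 1 ≤ d)
    (P : Set C) (hsilt : IsSiltingSet P)
    (hdsilt : ∀ A ∈ P, ∀ B ∈ P, ∀ i j : ℕ, 1 ≤ i → 1 ≤ j →
      ∀ f : iterObj (nud S d) j A ⟶ B⟦(i : ℤ)⟧, f = 0) :
    ∀ X ∈ UdSet S d P, ∀ Y ∈ UdSet S d P, ∀ i : ℤ, 1 ≤ i → i ≤ (d : ℤ) - 1 →
      ∀ f : X ⟶ Y⟦i⟧, f = 0 := by
  have hOrbits : ∀ U ∈ ⋃ A ∈ P, nudOrbit S d A, ∀ V ∈ ⋃ A ∈ P, nudOrbit S d A,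
      IsDRigidPair d U V := by
    simp only [Set.mem_iUnion]
    rintro U ⟨A, hA, hU⟩ V ⟨B, hB, hV⟩
    obtain ⟨m, ⟨eU⟩⟩ := exists_iso_nudPow_of_mem_nudOrbit hU
    obtain ⟨n, ⟨eV⟩⟩ := exists_iso_nudPow_of_mem_nudOrbit hV
    exact (IsDRigidPair.congr_iff eU eV).2
      (isDRigidPair_nudPow_of_dSilting hsilt.1 hdsilt m n hA hB)
  intro X hX Y hY i h₁ h₂ f
  have := IsDRigidPair.of_mem_addSet hOrbits hX hY i h₁ h₂
  exact Subsingleton.elim f 0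
end
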